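/- There exists a mixed-goods instance where the maximum Nash welfare allocation is not weak EFM: with two agents, two indivisible goods each worth 0.4 to agent 1 and 0.499 to agent 2, and a homogeneous cake worth 0.2 to agent 1 and 0.002 to agent 2, the Nash-welfare-maximizing allocation gives agent 1 one indivisible good and all the cake, and this allocation violates weak EFM. -/
import Mathlib


/-- Value of one indivisible good to agent `i` (both goods are identical). -/
noncomputable def gval (i : Fin 2) : ℝ := if i = 0 then 0.4 else 0.499

/-- Value of the whole (homogeneous) cake to agent `i`. -/
noncomputable def cval (i : Fin 2) : ℝ := if i = 0 then 0.2 else 0.002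

/-- Utility of agent `i` for agent `j`'s bundle in an allocation given by the good
assignment `owner : goods → agents` and cake fractions `x`. -/
noncomputable def u10 (owner : Fin 2 → Fin 2) (x : Fin 2 → ℝ) (i j : Fin 2) : ℝ :=
  (∑ g : Fin 2, if owner g = j then gval i else 0) + x j * cval i

/-- Nash welfare of an allocation. -/
noncomputable def NW10 (owner : Fin 2 → Fin 2) (x : Fin 2 → ℝ) : ℝ :=
  u10 owner x 0 0 * u10 owner x 1 1

/-- Weak EFM: toward a bundle whose cake part is worth 0 to agent `i`
(in particular if it has no cake), EF1 over the indivisible goods is required;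
otherwise EF is required. -/
def WeakEFM10 (owner : Fin 2 → Fin 2) (x : Fin 2 → ℝ) : Prop :=
  ∀ i j : Fin 2,
    (x j * cval i = 0 →
      ((∀ g, owner g ≠ j) ∨
        ∃ g, owner g = j ∧ u10 owner x i i ≥ u10 owner x i j - gval i)) ∧
    (x j * cval i ≠ 0 → u10 owner x i i ≥ u10 owner x i j)

/-- The maximum Nash welfare allocation gives agent 1 one indivisible good and all
of the cake, and it is not weak EFM. -/
theorem MNW_not_weak_EFM :
    ∃ (owner : Fin 2 → Fin 2) (x : Fin 2 → ℝ),
      (∀ j, 0 ≤ x j) ∧ x 0 + x 1 = 1 ∧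
      -- agent 1 (index 0) gets exactly one indivisible good and the whole cake
      (∃! g : Fin 2, owner g = 0) ∧ x 0 = 1 ∧
      -- this allocation maximizes Nash welfare over all allocations
      (∀ (owner' : Fin 2 → Fin 2) (x' : Fin 2 → ℝ), (∀ j, 0 ≤ x' j) →
        x' 0 + x' 1 = 1 → NW10 owner' x' ≤ NW10 owner x) ∧
      -- but it is not weak EFM
      ¬ WeakEFM10 owner x := by
  refine ⟨id, fun j => if j = 0 then 1 else 0, ?_, by norm_num, ?_, by norm_num, ?_, ?_⟩
  · intro j; dsimp only; split <;> norm_num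
  · exact ⟨0, rfl, fun g hg => hg⟩
  · intro owner' x' hx' hsum
    have h0 : owner' 0 = 0 ∨ owner' 0 = 1 := by omega
    have h1 : owner' 1 = 0 ∨ owner' 1 = 1 := by omega
    have ha := hx' 0
    have hb := hx' 1
    simp only [NW10, u10, gval, cval, Fin.sum_univ_two, id_eq]
    norm_num
    rcases h0 with h0 | h0 <;> rcases h1 with h1 | h1 <;>
      simp [h0, h1] <;> nlinarith [mul_nonneg ha hb, sq_nonneg (x' 0), sq_nonneg (x' 1)]
  · intro h
    have h2 := (h 1 0).2
    simp only [u10, gval, cval, Fin.sum_univ_two, id_eq] at h2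
    norm_num at h2
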